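/- In the algebra A = A_T(q_0,q_1,q_2,q_3), the relations imply that e_i x_{i+1}^{4T+2} = −q_i · e_i x_i^{4T+2} for every i (indices mod 4), and consequently e_i x_l^{4T+3} = 0 for l = 0,1 and all i; hence every path of length ≥ 4T+3 is zero in A. -/

import Mathlib

noncomputable section

/-- Generators: the vertices `e_i` (`i : ZMod 4`) and the arrows
`a_{l,m} : e_m → e_{m+1}` (`l : ZMod 2`, `m : ZMod 4`). -/
abbrev QGen : Type := (ZMod 4) ⊕ (ZMod 2 × ZMod 4)

variable (K : Type*) [Field K]

/-- The vertex generator `e_i` in the free algebra. -/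
def vgen (i : ZMod 4) : FreeAlgebra K QGen := FreeAlgebra.ι K (Sum.inl i)

/-- The arrow generator `a_{l,m}` in the free algebra. -/
def agen (l : ZMod 2) (m : ZMod 4) : FreeAlgebra K QGen := FreeAlgebra.ι K (Sum.inr (l, m))

/-- `x_l = Σ_m a_{l,m}` in the free algebra. -/
def xgen (l : ZMod 2) : FreeAlgebra K QGen := ∑ m : ZMod 4, agen K l m

/-- Reduction of a vertex index mod 4 to an `x`-index mod 2. -/
def toL (i : ZMod 4) : ZMod 2 := (i.val : ZMod 2)

/-- The defining relations of `A_T(q_0,q_1,q_2,q_3)`: the path-algebra relations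
of the cyclic quiver with vertices `e_0,…,e_3` and arrows
`a_{0,m}, a_{1,m} : e_m → e_{m+1}`, together with `x_l x_{l+1} = 0` and
`e_i (q_i x_i^{4T+2} + x_{i+1}^{4T+2}) = 0`. -/
inductive ARel (T : ℕ) (q : ZMod 4 → K) : FreeAlgebra K QGen → FreeAlgebra K QGen → Prop
  | vert (i j : ZMod 4) :
      ARel T q (vgen K i * vgen K j) (if i = j then vgen K i else 0)
  | sum_vert : ARel T q (∑ i : ZMod 4, vgen K i) 1
  | left (l : ZMod 2) (m : ZMod 4) : ARel T q (vgen K m * agen K l m) (agen K l m)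
  | right (l : ZMod 2) (m : ZMod 4) : ARel T q (agen K l m * vgen K (m + 1)) (agen K l m)
  | left_zero (l : ZMod 2) (m j : ZMod 4) (h : j ≠ m) : ARel T q (vgen K j * agen K l m) 0
  | right_zero (l : ZMod 2) (m j : ZMod 4) (h : j ≠ m + 1) : ARel T q (agen K l m * vgen K j) 0
  | zigzag (l : ZMod 2) : ARel T q (xgen K l * xgen K (l + 1)) 0
  | socle (i : ZMod 4) :
      ARel T q (vgen K i * (q i • xgen K (toL i) ^ (4 * T + 2)
        + xgen K (toL (i + 1)) ^ (4 * T + 2))) 0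

/-- The self-injective special biserial algebra `A = A_T(q_0,q_1,q_2,q_3)`. -/
def AT (T : ℕ) (q : ZMod 4 → K) : Type _ := RingQuot (ARel K T q)

instance (T : ℕ) (q : ZMod 4 → K) : Ring (AT K T q) := inferInstanceAs (Ring (RingQuot _))
instance (T : ℕ) (q : ZMod 4 → K) : Algebra K (AT K T q) :=
  inferInstanceAs (Algebra K (RingQuot _))

/-- The vertex idempotent `e_i` in `A`. -/
def Ae (T : ℕ) (q : ZMod 4 → K) (i : ZMod 4) : AT K T q :=
  RingQuot.mkAlgHom K (ARel K T q) (vgen K i)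

/-- The arrow `a_{l,m}` in `A`. -/
def Aa (T : ℕ) (q : ZMod 4 → K) (l : ZMod 2) (m : ZMod 4) : AT K T q :=
  RingQuot.mkAlgHom K (ARel K T q) (agen K l m)

/-- `x_l = Σ_m a_{l,m}` in `A`. -/
def Ax (T : ℕ) (q : ZMod 4 → K) (l : ZMod 2) : AT K T q :=
  RingQuot.mkAlgHom K (ARel K T q) (xgen K l)

/-- The `K`-linear map `a ↦ e_i · a · e_t` on `A`, whose range is the
subspace `e_i A e_t`. -/
def sandwich (T : ℕ) (q : ZMod 4 → K) (i t : ZMod 4) : AT K T q →ₗ[K] AT K T q :=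
  (LinearMap.mulLeft K (Ae K T q i)).comp (LinearMap.mulRight K (Ae K T q t))

/-! Writing `N = 4T + 2`, the socle relation at `i` says `e_i x_{i+1}^N = -q_i e_i x_i^N`.
Hence `e_i x_l^{N+1}` is, after moving one factor `x_l` to the side where the relation at `i` or
at `i + 1` applies, a multiple of a word containing `x_l x_{l+1}` or `x_{l+1} x_l`, both zero.
A path of length `n` starting at `e_i` is `e_i` times a word of length `n` in `x_0, x_1`, and such
a word is either a power of a single `x_l` or contains one of these zero factors. -/

section PathAlgebra

variable {K} {T : ℕ} {q : ZMod 4 → K}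

theorem Ae_mul_Aa_self (l : ZMod 2) (m : ZMod 4) : Ae K T q m * Aa K T q l m = Aa K T q l m := by
  have hrel := RingQuot.mkAlgHom_rel K (ARel.left (T := T) (q := q) l m)
  simp only [map_mul] at hrel
  exact hrel

theorem Ae_mul_Aa_of_ne (l : ZMod 2) {m j : ZMod 4} (h : j ≠ m) :
    Ae K T q j * Aa K T q l m = 0 := by
  have hrel := RingQuot.mkAlgHom_rel K (ARel.left_zero (T := T) (q := q) l m j h)
  simp only [map_mul, map_zero] at hrel
  exact hrel

theorem Aa_mul_Ae_add_one (l : ZMod 2) (m : ZMod 4) :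
    Aa K T q l m * Ae K T q (m + 1) = Aa K T q l m := by
  have hrel := RingQuot.mkAlgHom_rel K (ARel.right (T := T) (q := q) l m)
  simp only [map_mul] at hrel
  exact hrel

theorem Aa_mul_Ae_of_ne (l : ZMod 2) {m j : ZMod 4} (h : j ≠ m + 1) :
    Aa K T q l m * Ae K T q j = 0 := by
  have hrel := RingQuot.mkAlgHom_rel K (ARel.right_zero (T := T) (q := q) l m j h)
  simp only [map_mul, map_zero] at hrel
  exact hrel

theorem Ax_mul_Ax_add_one (l : ZMod 2) : Ax K T q l * Ax K T q (l + 1) = 0 := by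
  have hrel := RingQuot.mkAlgHom_rel K (ARel.zigzag (T := T) (q := q) l)
  simp only [map_mul, map_zero] at hrel
  exact hrel

theorem Ae_mul_Ax_pow_toL_add_one (i : ZMod 4) :
    Ae K T q i * Ax K T q (toL (i + 1)) ^ (4 * T + 2)
      = -(q i) • (Ae K T q i * Ax K T q (toL i) ^ (4 * T + 2)) := by
  have hsocle : q i • (Ae K T q i * Ax K T q (toL i) ^ (4 * T + 2))
      + Ae K T q i * Ax K T q (toL (i + 1)) ^ (4 * T + 2) = 0 := by
    have hrel := RingQuot.mkAlgHom_rel K (ARel.socle (T := T) (q := q) i)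
    simp only [mul_add, mul_smul_comm, map_add, map_mul, map_smul, map_pow, map_zero] at hrel
    exact hrel
  rw [neg_smul, eq_neg_of_add_eq_zero_right hsocle]

theorem Ax_eq_sum (l : ZMod 2) : Ax K T q l = ∑ m : ZMod 4, Aa K T q l m :=
  map_sum (RingQuot.mkAlgHom K (ARel K T q)) _ _

theorem Ae_mul_Ax (m : ZMod 4) (l : ZMod 2) : Ae K T q m * Ax K T q l = Aa K T q l m := by
  rw [Ax_eq_sum, Finset.mul_sum, Finset.sum_eq_single_of_mem m (Finset.mem_univ m)
    fun j _ hj => Ae_mul_Aa_of_ne l (Ne.symm hj), Ae_mul_Aa_self]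

theorem Ax_mul_Ae_add_one (l : ZMod 2) (m : ZMod 4) :
    Ax K T q l * Ae K T q (m + 1) = Aa K T q l m := by
  rw [Ax_eq_sum, Finset.sum_mul, Finset.sum_eq_single_of_mem m (Finset.mem_univ m)
    fun j _ hj => Aa_mul_Ae_of_ne l (by simpa using Ne.symm hj), Aa_mul_Ae_add_one]

theorem toL_add_one : ∀ i : ZMod 4, toL (i + 1) = toL i + 1 := by decide

theorem Ax_pow_mul_Ax_add_one (l : ZMod 2) {n : ℕ} (hn : n ≠ 0) :
    Ax K T q l ^ n * Ax K T q (l + 1) = 0 := by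
  obtain ⟨k, rfl⟩ := Nat.exists_eq_succ_of_ne_zero hn
  rw [pow_succ, mul_assoc, Ax_mul_Ax_add_one, mul_zero]

theorem Ax_add_one_mul_Ax (l : ZMod 2) : Ax K T q (l + 1) * Ax K T q l = 0 := by
  have hl : l + 1 + 1 = l := by revert l; decide
  simpa only [hl] using Ax_mul_Ax_add_one (T := T) (q := q) (l + 1)

theorem Ax_add_one_mul_Ax_pow (l : ZMod 2) {n : ℕ} (hn : n ≠ 0) :
    Ax K T q (l + 1) * Ax K T q l ^ n = 0 := by
  obtain ⟨k, rfl⟩ := Nat.exists_eq_succ_of_ne_zero hn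
  rw [pow_succ', ← mul_assoc, Ax_add_one_mul_Ax, zero_mul]

theorem Ae_mul_Ax_pow_four_mul_add_three (l : ZMod 2) (i : ZMod 4) :
    Ae K T q i * Ax K T q l ^ (4 * T + 3) = 0 := by
  obtain rfl | rfl : l = toL (i + 1) ∨ l = toL (i + 1) + 1 := by
    generalize toL (i + 1) = k
    revert l k
    decide
  · -- the socle relation at `i` trades `x_{i+1}^{4T+2}` for `x_i^{4T+2}`, which `x_{i+1}` kills
    rw [pow_succ, ← mul_assoc, Ae_mul_Ax_pow_toL_add_one, smul_mul_assoc, mul_assoc, toL_add_one,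
      Ax_pow_mul_Ax_add_one _ (by omega), mul_zero, smul_zero]
  · -- the socle relation at `i + 1` trades `x_i^{4T+2}` for `x_{i+1}^{4T+2}`, which `x_i` kills
    have hsocle := Ae_mul_Ax_pow_toL_add_one (T := T) (q := q) (i + 1)
    rw [toL_add_one (i + 1)] at hsocle
    rw [pow_succ', ← mul_assoc, Ae_mul_Ax, ← Ax_mul_Ae_add_one, mul_assoc, hsocle,
      mul_smul_comm, ← mul_assoc, Ax_mul_Ae_add_one, ← Ae_mul_Ax, mul_assoc,
      Ax_add_one_mul_Ax_pow _ (by omega), mul_zero, smul_zero]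

theorem Ae_mul_Ax_pow_eq_zero (l : ZMod 2) (i : ZMod 4) {n : ℕ} (hn : 4 * T + 3 ≤ n) :
    Ae K T q i * Ax K T q l ^ n = 0 := by
  obtain ⟨k, rfl⟩ := Nat.exists_eq_add_of_le hn
  rw [pow_add, ← mul_assoc, Ae_mul_Ax_pow_four_mul_add_three, zero_mul]

theorem Ax_mul_prod_map_Ax (l : ZMod 2) (ls : List (ZMod 2)) :
    Ax K T q l * (ls.map (Ax K T q)).prod = Ax K T q l ^ (ls.length + 1)
      ∨ Ax K T q l * (ls.map (Ax K T q)).prod = 0 := by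
  induction ls generalizing l with
  | nil => simp
  | cons l' ls ih =>
    rw [List.map_cons, List.prod_cons, List.length_cons]
    obtain rfl | rfl : l' = l ∨ l' = l + 1 := by revert l l'; decide
    · rcases ih l' with h | h
      · exact .inl (by rw [h, ← pow_succ'])
      · exact .inr (by rw [h, mul_zero])
    · exact .inr (by rw [← mul_assoc, Ax_mul_Ax_add_one, zero_mul])

theorem prod_map_zipIdx_Aa (l : ZMod 2) (ls : List (ZMod 2)) (i : ZMod 4) :
    ((l :: ls).zipIdx.map (fun p => Aa K T q p.1 (i + (p.2 : ZMod 4)))).prod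
      = Ae K T q i * ((l :: ls).map (Ax K T q)).prod := by
  induction ls generalizing l i with
  | nil => simp [Ae_mul_Ax]
  | cons l' ls ih =>
    have hshift : (fun p : ZMod 2 × ℕ => Aa K T q p.1 (i + (p.2 : ZMod 4))) ∘ Prod.map id (· + 1)
        = fun p => Aa K T q p.1 (i + 1 + (p.2 : ZMod 4)) := by
      funext p
      simp only [Function.comp_apply, Prod.map_fst, Prod.map_snd, id_eq, Nat.cast_succ]
      ring_nf
    rw [List.zipIdx_cons', List.map_cons, List.map_map, List.prod_cons, hshift, ih,
      Nat.cast_zero, add_zero, ← mul_assoc, Aa_mul_Ae_add_one, ← Ae_mul_Ax, mul_assoc]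
    rfl

end PathAlgebra

theorem stmt14 (T : ℕ) (q : ZMod 4 → K) :
    (∀ i : ZMod 4,
      Ae K T q i * Ax K T q (toL (i + 1)) ^ (4 * T + 2)
        = -(q i) • (Ae K T q i * Ax K T q (toL i) ^ (4 * T + 2))) ∧
    (∀ (l : ZMod 2) (i : ZMod 4), Ae K T q i * Ax K T q l ^ (4 * T + 3) = 0) ∧
    (∀ (ls : List (ZMod 2)), 4 * T + 3 ≤ ls.length → ∀ i : ZMod 4,
      (ls.zipIdx.map (fun p => Aa K T q p.1 (i + (p.2 : ZMod 4)))).prod = 0) := by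
  refine ⟨Ae_mul_Ax_pow_toL_add_one, Ae_mul_Ax_pow_four_mul_add_three, ?_⟩
  rintro (_ | ⟨l, ls⟩) hlen i
  · simp at hlen
  rw [prod_map_zipIdx_Aa, List.map_cons, List.prod_cons]
  rcases Ax_mul_prod_map_Ax (T := T) (q := q) l ls with h | h
  · rw [h, Ae_mul_Ax_pow_eq_zero l i (by simpa using hlen)]
  · rw [h, mul_zero]

end
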